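/- For all n ≥ 2, H_{2n-3} = (-1)^n · sum_{j=2}^{n} LS(n,j) · j! · s(j,2) − δ_{n,2}, where LS(n,j) are Legendre-Stirling numbers of the second kind, s(j,2) are classical (signed) Stirling numbers of the first kind, and H_{2k-1} are the Genocchi numbers of the second kind. -/

import Mathlib

/-!
Unfolding the recurrence of `LS(n+1, ·)` gives, for every sequence `a`,
`∑_j LS(n+1,j) a_j = ∑_i LS(n,i) (a_{i+1} + i(i+1) a_i)`.
With `a_k = ±k!(z+1)⋯(z+k-1)` this turns the recurrence of `F̃` into itself, so
`F̃_n(z) = ∑_k (-1)^{n+k} LS(n,k) k!(z+1)⋯(z+k-1)`, and one more step gives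
`H_{2n+1} = ∑_i (-1)^{n+i} LS(n,i) (i+1)! i!`. Two steps with `a_j = j! s(j,2)` turn
`(-1)^n ∑_j LS(n+2,j) j! s(j,2)` into the same sum plus `(-1)^n LS(n,0) = δ_{n,0}`, the correction
term of the theorem.
-/

/-- `F̃ 1 = 1`, `F̃_{n+1}(z) = z(z+1) F̃_n(z+1) - (z-1)z F̃_n(z)`. -/
def Ftilde : ℕ → ℚ → ℚ
  | 0, _ => 1
  | 1, _ => 1
  | n + 2, z => z * (z + 1) * Ftilde (n + 1) (z + 1) - (z - 1) * z * Ftilde (n + 1) z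

/-- Genocchi numbers of the second kind: `genocchiH n = H_{2n-1} = F̃_n(1)`. -/
def genocchiH (n : ℕ) : ℚ := Ftilde n 1

/-- Legendre-Stirling numbers of the second kind. -/
def legendreLS : ℕ → ℕ → ℚ
  | 0, 0 => 1
  | 0, _ + 1 => 0
  | _ + 1, 0 => 0
  | n + 1, j + 1 => legendreLS n j + ((j : ℚ) + 1) * ((j : ℚ) + 2) * legendreLS n (j + 1)

/-- Classical (signed) Stirling numbers of the first kind:
`x(x-1)⋯(x-n+1) = ∑_j s(n,j) x^j`, via `s(n+1,j) = s(n,j-1) - n s(n,j)`. -/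
def stirlingFirst : ℕ → ℕ → ℚ
  | 0, 0 => 1
  | 0, _ + 1 => 0
  | _ + 1, 0 => 0
  | n + 1, j + 1 => stirlingFirst n j - (n : ℚ) * stirlingFirst n (j + 1)

open Finset
open scoped Nat

theorem legendreLS_succ_zero (n : ℕ) : legendreLS (n + 1) 0 = 0 := rfl

theorem legendreLS_succ_succ (n j : ℕ) :
    legendreLS (n + 1) (j + 1) =
      legendreLS n j + ((j : ℚ) + 1) * ((j : ℚ) + 2) * legendreLS n (j + 1) := by
  rw [legendreLS]

theorem legendreLS_eq_zero_of_lt {n j : ℕ} (h : n < j) : legendreLS n j = 0 := by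
  induction n generalizing j with
  | zero => obtain ⟨j, rfl⟩ := Nat.exists_eq_add_of_lt h; rfl
  | succ n ih =>
    obtain ⟨j, rfl⟩ := Nat.exists_eq_add_of_le' (Nat.one_le_of_lt h)
    rw [legendreLS_succ_succ, ih (by omega), ih (by omega), mul_zero, add_zero]

theorem sum_legendreLS_succ (n : ℕ) (a : ℕ → ℚ) :
    ∑ j ∈ range (n + 2), legendreLS (n + 1) j * a j =
      ∑ i ∈ range (n + 1), legendreLS n i * (a (i + 1) + i * (i + 1) * a i) := by
  set g : ℕ → ℚ := fun i ↦ i * (i + 1) * legendreLS n i * a i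
  have hshift : ∑ i ∈ range (n + 1), g (i + 1) = ∑ i ∈ range (n + 1), g i :=
    calc ∑ i ∈ range (n + 1), g (i + 1)
        = ∑ i ∈ range (n + 2), g i := by simp [sum_range_succ' g, g]
      _ = ∑ i ∈ range (n + 1), g i := by
        simp [sum_range_succ g (n + 1), g, legendreLS_eq_zero_of_lt (lt_add_one n)]
  calc ∑ j ∈ range (n + 2), legendreLS (n + 1) j * a j
      = ∑ i ∈ range (n + 1), legendreLS n i * a (i + 1) + ∑ i ∈ range (n + 1), g (i + 1) := by
        rw [sum_range_succ', legendreLS_succ_zero, zero_mul, add_zero, ← sum_add_distrib]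
        refine sum_congr rfl fun i _ ↦ ?_
        simp only [g, legendreLS_succ_succ]
        push_cast
        ring
    _ = ∑ i ∈ range (n + 1), legendreLS n i * (a (i + 1) + i * (i + 1) * a i) := by
        rw [hshift, ← sum_add_distrib]
        exact sum_congr rfl fun i _ ↦ by simp only [g]; ring

theorem stirlingFirst_eq_zero_of_lt {n j : ℕ} (h : n < j) : stirlingFirst n j = 0 := by
  induction n generalizing j with
  | zero => obtain ⟨j, rfl⟩ := Nat.exists_eq_add_of_lt h; rfl
  | succ n ih =>
    obtain ⟨j, rfl⟩ := Nat.exists_eq_add_of_le' (Nat.one_le_of_lt h)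
    rw [stirlingFirst, ih (by omega), ih (by omega), mul_zero, sub_zero]

theorem stirlingFirst_succ_one (n : ℕ) : stirlingFirst (n + 1) 1 = (-1) ^ n * n ! := by
  induction n with
  | zero => norm_num [stirlingFirst]
  | succ n ih =>
    rw [stirlingFirst, ih, Nat.factorial_succ, show stirlingFirst (n + 1) 0 = 0 from rfl]
    push_cast
    ring

def risingBasis (k : ℕ) (z : ℚ) : ℚ := k ! * ∏ i ∈ range (k - 1), (z + i + 1)

theorem risingBasis_succ {k : ℕ} (hk : k ≠ 0) (z : ℚ) :
    risingBasis (k + 1) z = (k + 1) * (z + k) * risingBasis k z := by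
  obtain ⟨k, rfl⟩ := Nat.exists_eq_succ_of_ne_zero hk
  simp only [risingBasis, Nat.succ_sub_one, prod_range_succ, Nat.factorial_succ]
  push_cast
  ring

theorem add_one_mul_risingBasis_add_one {k : ℕ} (hk : k ≠ 0) (z : ℚ) :
    (z + 1) * risingBasis k (z + 1) = (z + k) * risingBasis k z := by
  obtain ⟨k, rfl⟩ := Nat.exists_eq_succ_of_ne_zero hk
  have hprod : (z + 1) * ∏ i ∈ range k, (z + 1 + i + 1) = ∏ i ∈ range (k + 1), (z + i + 1) := by
    rw [prod_range_succ', mul_comm]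
    push_cast
    ring_nf
  simp only [risingBasis, Nat.succ_sub_one]
  rw [mul_left_comm, hprod, prod_range_succ]
  push_cast
  ring

theorem risingBasis_one (k : ℕ) : risingBasis k 1 = (k ! : ℚ) ^ 2 := by
  rcases k with _ | k
  · simp [risingBasis]
  · have hprod : ∏ i ∈ range k, ((1 : ℚ) + i + 1) = (k + 1)! := by
      rw [← prod_range_add_one_eq_factorial, prod_range_succ']
      push_cast
      rw [mul_one]
      exact prod_congr rfl fun i _ ↦ by ring
    simp only [risingBasis, Nat.add_sub_cancel, hprod]
    ring

theorem Ftilde_succ_eq_sum (n : ℕ) (z : ℚ) :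
    Ftilde (n + 1) z =
      ∑ k ∈ range (n + 2), (-1) ^ (n + 1 + k) * legendreLS (n + 1) k * risingBasis k z := by
  induction n generalizing z with
  | zero => simp [Ftilde, legendreLS, risingBasis, sum_range_succ]
  | succ n ih =>
    have hstep (k : ℕ) (hk : k ≠ 0) :
        z * (z + 1) * risingBasis k (z + 1) - (z - 1) * z * risingBasis k z =
          risingBasis (k + 1) z - k * (k + 1) * risingBasis k z := by
      rw [risingBasis_succ hk, mul_assoc, add_one_mul_risingBasis_add_one hk]
      ring
    trans ∑ k ∈ range (n + 3), legendreLS (n + 2) k * ((-1) ^ (n + 2 + k) * risingBasis k z)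
    · rw [Ftilde, ih, ih, mul_sum, mul_sum, ← sum_sub_distrib, sum_legendreLS_succ]
      refine sum_congr rfl fun k _ ↦ ?_
      rcases eq_or_ne k 0 with rfl | hk
      · simp [legendreLS_succ_zero]
      · linear_combination (-1) ^ (n + 1 + k) * legendreLS (n + 1) k * hstep k hk
    · exact sum_congr rfl fun k _ ↦ by ring

theorem genocchiH_succ_eq_sum (n : ℕ) :
    genocchiH (n + 1) =
      ∑ i ∈ range (n + 1), (-1) ^ (n + i) * legendreLS n i * ((i + 1)! * i !) := by
  rw [genocchiH, Ftilde_succ_eq_sum]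
  trans ∑ k ∈ range (n + 2), legendreLS (n + 1) k * ((-1) ^ (n + 1 + k) * (k ! : ℚ) ^ 2)
  · exact sum_congr rfl fun k _ ↦ by rw [risingBasis_one]; ring
  · rw [sum_legendreLS_succ]
    refine sum_congr rfl fun i _ ↦ ?_
    rw [Nat.factorial_succ]
    push_cast
    ring

theorem sum_legendreLS_factorial_stirlingFirst_two (n : ℕ) :
    ∑ j ∈ range (n + 3), legendreLS (n + 2) j * j ! * stirlingFirst j 2 =
      ∑ i ∈ range (n + 1), (-1) ^ i * legendreLS n i * ((i + 1)! * i !) + legendreLS n 0 := by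
  simp_rw [mul_assoc (legendreLS _ _)]
  rw [sum_legendreLS_succ]
  trans ∑ i ∈ range (n + 2), legendreLS (n + 1) i * ((i + 1)! * stirlingFirst i 1)
  · refine sum_congr rfl fun i _ ↦ ?_
    rw [stirlingFirst, Nat.factorial_succ]
    push_cast
    ring
  rw [sum_legendreLS_succ]
  -- the extra `1` at `i = 0` is `s(0,0)`, via `s(1,1) = s(0,0) - 0 * s(0,1)`
  trans ∑ i ∈ range (n + 1),
    legendreLS n i * ((-1) ^ i * ((i + 1)! * i !) + if i = 0 then 1 else 0)
  · refine sum_congr rfl fun i _ ↦ ?_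
    rcases i with _ | i
    · norm_num [stirlingFirst]
    · rw [if_neg i.succ_ne_zero, add_zero, stirlingFirst_succ_one, stirlingFirst_succ_one]
      simp only [Nat.factorial_succ]
      push_cast
      ring
  · simp only [mul_add, sum_add_distrib, mul_ite, mul_one, mul_zero, sum_ite_eq', mem_range,
      Nat.zero_lt_succ, if_true]
    congr 1
    exact sum_congr rfl fun i _ ↦ by ring

/-- `H_{2n-3} = (-1)^n ∑_{j=2}^n LS(n,j) j! s(j,2) − δ_{n,2}` for `n ≥ 2`. -/
theorem genocchiH_LS_stirling (n : ℕ) (hn : 2 ≤ n) :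
    genocchiH (n - 1) =
      (-1) ^ n * (∑ j ∈ Finset.Icc 2 n, legendreLS n j * (j.factorial : ℚ) * stirlingFirst j 2)
        - (if n = 2 then 1 else 0) := by
  obtain ⟨n, rfl⟩ := Nat.exists_eq_add_of_le' hn
  have hIcc : ∑ j ∈ Icc 2 (n + 2), legendreLS (n + 2) j * j ! * stirlingFirst j 2 =
      ∑ j ∈ range (n + 3), legendreLS (n + 2) j * j ! * stirlingFirst j 2 := by
    refine sum_subset (fun j hj ↦ by simp only [mem_Icc, mem_range] at hj ⊢; omega)
      fun j hj hj' ↦ ?_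
    simp only [mem_Icc, mem_range] at hj hj'
    rw [stirlingFirst_eq_zero_of_lt (by omega), mul_zero]
  have hdelta : (-1) ^ n * legendreLS n 0 = if n + 2 = 2 then 1 else 0 := by
    rcases n with _ | n
    · norm_num [legendreLS]
    · simp [legendreLS_succ_zero]
  rw [show n + 2 - 1 = n + 1 from rfl, genocchiH_succ_eq_sum, hIcc,
    sum_legendreLS_factorial_stirlingFirst_two, ← hdelta, mul_add, mul_sum]
  ring_nf
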